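/- Let μ₁,…,μ_m be nonzero integers with ∑ᵢ μᵢ = 0, and let c₁,…,c_m be commuting nilpotent elements of a commutative ℚ-algebra R. Then for every r ∈ ℤ, the product ∏ᵢ (ξ + cᵢ/μᵢ)^{μᵢ r}, expanded as a Laurent series in ξ^{-1}, has the form ∑_{m≥0} P_m(r) ξ^{-m} where each coefficient P_m(r) ∈ R is polynomial in r of degree at most m; in particular the ξ⁰-coefficient is 1 and the ξ^{-1}-coefficient is r·∑ᵢ cᵢ. -/

import Mathlib

/-!
Write `ξ + cᵢ/μᵢ = ξ (1 + dᵢ T)` with `T = ξ⁻¹` and `dᵢ = cᵢ/μᵢ`. Since `∑ μᵢ = 0` the powers of `ξ`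
cancel, and the product is the power series `∏ᵢ (1 + dᵢ T)^{μᵢ r}` in `T`. Each factor is the
binomial series `∑ⱼ (μᵢ r choose j) dᵢʲ Tʲ`, whose `j`-th coefficient is a polynomial of degree
`≤ j` in `r`. So the same product, formed over `R[r]`, has `n`-th coefficient a polynomial `Pₙ`
of degree `≤ n`, and evaluating at an integer `r` gives the Laurent expansion.
-/

open Finset Polynomial

lemma Finset.prod_zpow_eq_zpow_sum {G ι : Type*} [CommGroup G] (s : Finset ι) (g : G)
    (k : ι → ℤ) : ∏ i ∈ s, g ^ k i = g ^ ∑ i ∈ s, k i := by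
  classical
  induction s using Finset.induction_on with
  | empty => simp
  | insert j s hj ih => rw [prod_insert hj, sum_insert hj, ih, zpow_add]

lemma Finset.prod_mul_zpow_of_sum_eq_zero {G ι : Type*} [CommGroup G] (s : Finset ι) (g : G)
    (v : ι → G) (k : ι → ℤ) (hk : ∑ i ∈ s, k i = 0) :
    ∏ i ∈ s, (g * v i) ^ k i = ∏ i ∈ s, v i ^ k i := by
  rw [prod_congr rfl fun i _ => mul_zpow g (v i) _, prod_mul_distrib, prod_zpow_eq_zpow_sum, hk,
    zpow_zero, one_mul]

namespace PowerSeries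

lemma isUnit_one_add_X {A : Type*} [CommRing A] : IsUnit (1 + X : PowerSeries A) := by
  simp [isUnit_iff_constantCoeff]

lemma coe_zpow_eq_binomialSeries {A : Type*} [CommRing A] (u : (PowerSeries A)ˣ)
    (hu : (u : PowerSeries A) = 1 + X) (k : ℤ) :
    ((u ^ k : (PowerSeries A)ˣ) : PowerSeries A) = binomialSeries A k := by
  have hnat (n : ℕ) :
      ((u ^ n : (PowerSeries A)ˣ) : PowerSeries A) = binomialSeries A (n : ℤ) := by
    rw [Units.val_pow_eq_pow_val, hu, binomialSeries_nat]
  obtain ⟨n, rfl | rfl⟩ := k.eq_nat_or_neg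
  · exact_mod_cast hnat n
  · rw [zpow_neg, zpow_natCast]
    refine Units.inv_eq_of_mul_eq_one_left ?_
    rw [hnat, ← binomialSeries_add, neg_add_cancel, binomialSeries_zero]

lemma natDegree_coeff_prod_le {R ι : Type*} [CommSemiring R] [DecidableEq ι] (s : Finset ι)
    (f : ι → PowerSeries R[X]) (hf : ∀ i ∈ s, ∀ n, (coeff n (f i)).natDegree ≤ n) (n : ℕ) :
    (coeff n (∏ i ∈ s, f i)).natDegree ≤ n := by
  rw [coeff_prod]
  refine natDegree_sum_le_of_forall_le _ _ fun l hl => (natDegree_prod_le _ _).trans ?_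
  rw [← (mem_finsuppAntidiag.mp hl).1]
  exact sum_le_sum fun i hi => hf i hi (l i)

lemma coeff_one_prod {R ι : Type*} [CommSemiring R] (s : Finset ι) (f : ι → PowerSeries R)
    (hf : ∀ i ∈ s, constantCoeff (f i) = 1) :
    coeff 1 (∏ i ∈ s, f i) = ∑ i ∈ s, coeff 1 (f i) := by
  classical
  induction s using Finset.induction_on with
  | empty => simp
  | insert j s hj ih =>
    have hs : ∀ i ∈ s, constantCoeff (f i) = 1 := fun i hi => hf i (mem_insert_of_mem hi)
    rw [prod_insert hj, sum_insert hj, coeff_one_mul, map_prod, prod_eq_one hs,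
      hf j (mem_insert_self j s), ih hs, mul_one, mul_one]

end PowerSeries

namespace HahnSeries

lemma isUnit_single_one {Γ R : Type*} [AddCommGroup Γ] [PartialOrder Γ]
    [IsOrderedCancelAddMonoid Γ] [CommRing R] (a : Γ) : IsUnit (single a (1 : R)) :=
  IsUnit.of_mul_eq_one (single (-a) 1) <| by
    rw [single_mul_single, add_neg_cancel, mul_one, single_zero_one]

lemma single_neg_one_add_single_zero {R : Type*} [CommRing R] (a : R) :
    single (-1 : ℤ) 1 + single 0 a
      = single (-1 : ℤ) 1 * ofPowerSeries ℤ R (PowerSeries.rescale a (1 + PowerSeries.X)) := by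
  simp [PowerSeries.rescale_X, ofPowerSeries_X, ofPowerSeries_C, mul_add, single_mul_single]

end HahnSeries

section RatAlgebra

variable {R : Type*} [CommRing R] [Algebra ℚ R]

variable (R) in
noncomputable def binomialPoly (j : ℕ) : R[X] :=
  (j.factorial : ℚ)⁻¹ • descPochhammer R j

lemma natDegree_binomialPoly_le (j : ℕ) : (binomialPoly R j).natDegree ≤ j := by
  refine (natDegree_smul_le _ _).trans ?_
  rw [← descPochhammer_map (Int.castRingHom R)]
  exact natDegree_map_le.trans (descPochhammer_natDegree ℤ j).le

@[simp]
lemma binomialPoly_zero : binomialPoly R 0 = 1 := by simp [binomialPoly]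

@[simp]
lemma binomialPoly_one : binomialPoly R 1 = X := by simp [binomialPoly]

lemma eval_intCast_binomialPoly (k : ℤ) (j : ℕ) :
    (binomialPoly R j).eval (k : R) = ((Ring.choose k j : ℤ) : R) := by
  have hfact : (j.factorial : ℤ) * Ring.choose k j = (descPochhammer ℤ j).eval k := by
    rw [eval_eq_smeval, Ring.descPochhammer_eq_factorial_smul_choose, nsmul_eq_mul]
  have hj : (j.factorial : ℚ) ≠ 0 := by positivity
  rw [binomialPoly, eval_smul, ← descPochhammer_eval_cast, ← hfact, Int.cast_mul, Int.cast_natCast,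
    Algebra.smul_def, ← mul_assoc, ← map_natCast (algebraMap ℚ R), ← map_mul, inv_mul_cancel₀ hj,
    map_one, one_mul]

lemma inv_intCast_smul_mul_intCast (c : R) {k : ℤ} (hk : k ≠ 0) :
    ((k : ℚ)⁻¹ • c) * (k : R) = c := by
  rw [← map_intCast (algebraMap ℚ R), Algebra.smul_def, mul_right_comm, ← map_mul,
    inv_mul_cancel₀ (Int.cast_ne_zero.mpr hk), map_one, one_mul]

/-- `(1 + a T) ^ (μ X)` as a power series in `T`, where the exponent involves the polynomial
variable `X`. -/
noncomputable def binomialSeriesPoly (a : R) (μ : ℤ) : PowerSeries R[X] :=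
  PowerSeries.mk fun j => C (a ^ j) * (binomialPoly R j).comp (C (μ : R) * X)

lemma natDegree_coeff_binomialSeriesPoly_le (a : R) (μ : ℤ) (n : ℕ) :
    (PowerSeries.coeff n (binomialSeriesPoly a μ)).natDegree ≤ n := by
  rw [binomialSeriesPoly, PowerSeries.coeff_mk]
  refine natDegree_C_mul_le _ _ |>.trans <| natDegree_comp_le.trans ?_
  calc (binomialPoly R n).natDegree * (C (μ : R) * X).natDegree
      ≤ n * 1 := Nat.mul_le_mul (natDegree_binomialPoly_le n)
        (natDegree_C_mul_le _ _ |>.trans natDegree_X_le)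
    _ = n := mul_one n

@[simp]
lemma constantCoeff_binomialSeriesPoly (a : R) (μ : ℤ) :
    PowerSeries.constantCoeff (binomialSeriesPoly a μ) = 1 := by
  simp [binomialSeriesPoly, ← PowerSeries.coeff_zero_eq_constantCoeff_apply]

lemma coeff_one_binomialSeriesPoly (a : R) (μ : ℤ) :
    PowerSeries.coeff 1 (binomialSeriesPoly a μ) = C (a * μ) * X := by
  simp [binomialSeriesPoly, mul_assoc]

lemma map_eval_binomialSeriesPoly (a : R) (μ r : ℤ) :
    PowerSeries.map (evalRingHom (r : R)) (binomialSeriesPoly a μ)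
      = PowerSeries.rescale a (PowerSeries.binomialSeries R (μ * r)) := by
  ext n
  rw [binomialSeriesPoly, PowerSeries.coeff_map, PowerSeries.coeff_mk, PowerSeries.coeff_rescale,
    PowerSeries.binomialSeries_coeff, coe_evalRingHom, eval_mul, eval_C, eval_comp, eval_mul,
    eval_C, eval_X, ← Int.cast_mul, eval_intCast_binomialPoly, zsmul_one]

end RatAlgebra

theorem crepant_polynomiality_general (R : Type*) [CommRing R] [Algebra ℚ R] (m : ℕ)
    (μ : Fin m → ℤ) (hμ : ∀ i, μ i ≠ 0) (hsum : ∑ i, μ i = 0)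
    (c : Fin m → R)
    (A : Fin m → (HahnSeries ℤ R)ˣ)
    (hA : ∀ i, (A i : HahnSeries ℤ R) =
      HahnSeries.single (-1 : ℤ) 1 + HahnSeries.single (0 : ℤ) ((μ i : ℚ)⁻¹ • c i)) :
    ∃ P : ℕ → Polynomial R,
      (∀ n, (P n).natDegree ≤ n) ∧
      P 0 = 1 ∧
      P 1 = Polynomial.C (∑ i, c i) * Polynomial.X ∧
      ∀ r : ℤ,
        (∀ n : ℤ, n < 0 →
          ((∏ i, A i ^ (μ i * r) : (HahnSeries ℤ R)ˣ) : HahnSeries ℤ R).coeff n = 0) ∧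
        (∀ n : ℕ,
          ((∏ i, A i ^ (μ i * r) : (HahnSeries ℤ R)ˣ) : HahnSeries ℤ R).coeff (n : ℤ)
            = (P n).eval (r : R)) := by
  set d : Fin m → R := fun i => (μ i : ℚ)⁻¹ • c i
  set F : PowerSeries R[X] := ∏ i, binomialSeriesPoly (d i) (μ i)
  obtain ⟨ξ, hξ⟩ := HahnSeries.isUnit_single_one (R := R) (-1 : ℤ)
  obtain ⟨u, hu⟩ := PowerSeries.isUnit_one_add_X (A := R)
  let V (i : Fin m) : (HahnSeries ℤ R)ˣ :=
    Units.map ((HahnSeries.ofPowerSeries ℤ R).comp (PowerSeries.rescale (d i))).toMonoidHom u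
  have hAV (i : Fin m) : A i = ξ * V i := by
    ext1
    rw [hA, Units.val_mul, hξ, Units.coe_map, hu]
    exact HahnSeries.single_neg_one_add_single_zero (d i)
  have hprod (r : ℤ) : ((∏ i, A i ^ (μ i * r) : (HahnSeries ℤ R)ˣ) : HahnSeries ℤ R)
      = HahnSeries.ofPowerSeries ℤ R (PowerSeries.map (evalRingHom (r : R)) F) := by
    rw [prod_congr rfl fun i _ => congrArg (· ^ (μ i * r)) (hAV i),
      prod_mul_zpow_of_sum_eq_zero _ _ _ _ (by rw [← sum_mul, hsum, zero_mul]), Units.coe_prod,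
      map_prod, map_prod]
    refine prod_congr rfl fun i _ => ?_
    rw [← map_zpow, Units.coe_map, map_eval_binomialSeriesPoly,
      ← PowerSeries.coe_zpow_eq_binomialSeries u hu, RingHom.toMonoidHom_eq_coe,
      MonoidHom.coe_coe, RingHom.comp_apply]
  refine ⟨fun n => PowerSeries.coeff n F, PowerSeries.natDegree_coeff_prod_le _ _
      fun i _ => natDegree_coeff_binomialSeriesPoly_le _ _, ?_, ?_,
    fun r => ⟨fun n hn => ?_, fun n => ?_⟩⟩
  · simp [F, PowerSeries.coeff_zero_eq_constantCoeff_apply]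
  · change PowerSeries.coeff 1 F = _
    rw [PowerSeries.coeff_one_prod _ _ fun i _ => constantCoeff_binomialSeriesPoly _ _]
    simp only [coeff_one_binomialSeriesPoly, ← sum_mul, ← map_sum]
    exact congrArg (C · * X) (sum_congr rfl fun i _ => inv_intCast_smul_mul_intCast (c i) (hμ i))
  · rw [hprod, PowerSeries.coeff_coe, if_pos hn]
  · rw [hprod, PowerSeries.coeff_coe, if_neg (by omega), Int.natAbs_natCast, PowerSeries.coeff_map,
      coe_evalRingHom]

/-- Crepant key computation: with nonzero integer weights μᵢ summing to 0 and nilpotent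
cᵢ in a commutative ℚ-algebra R, the product ∏ᵢ (ξ + cᵢ/μᵢ)^{μᵢ r}, expanded in
R((ξ^{-1})) (Hahn series in u = ξ^{-1}, so ξ = single (-1) 1 and ξ^{-n} has exponent n),
equals ∑_{n≥0} Pₙ(r) ξ^{-n} with Pₙ polynomial in r of degree ≤ n, P₀ = 1 and
P₁(r) = r·∑ᵢ cᵢ.  The factors (ξ + cᵢ/μᵢ) are the units Aᵢ and integer powers are
taken in the unit group. -/
theorem crepant_polynomiality (R : Type*) [CommRing R] [Algebra ℚ R] (m : ℕ)
    (μ : Fin m → ℤ) (hμ : ∀ i, μ i ≠ 0) (hsum : ∑ i, μ i = 0)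
    (c : Fin m → R) (hc : ∀ i, IsNilpotent (c i))
    (A : Fin m → (HahnSeries ℤ R)ˣ)
    (hA : ∀ i, (A i : HahnSeries ℤ R) =
      HahnSeries.single (-1 : ℤ) 1 + HahnSeries.single (0 : ℤ) ((μ i : ℚ)⁻¹ • c i)) :
    ∃ P : ℕ → Polynomial R,
      (∀ n, (P n).natDegree ≤ n) ∧
      P 0 = 1 ∧
      P 1 = Polynomial.C (∑ i, c i) * Polynomial.X ∧
      ∀ r : ℤ,
        (∀ n : ℤ, n < 0 →
          ((∏ i, A i ^ (μ i * r) : (HahnSeries ℤ R)ˣ) : HahnSeries ℤ R).coeff n = 0) ∧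
        (∀ n : ℕ,
          ((∏ i, A i ^ (μ i * r) : (HahnSeries ℤ R)ˣ) : HahnSeries ℤ R).coeff (n : ℤ)
            = (P n).eval (r : R)) :=
  crepant_polynomiality_general R m μ hμ hsum c A hA
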